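/- Let ε be a skew-symmetric integer matrix indexed by a finite set J, and fix k ∈ J. Consider the D-torus (ℂ*)^J × (ℂ*)^J with coordinates (B_i, X_i). The map φ : (ℂ*)^J × (ℂ*)^J → (ℂ*)^J × (ℂ*)^J given by X_i = ∏_j A_j^{ε_{ij}} and B_i = A_i°/A_i intertwines the pair of A-mutations (μ_k^A × μ_k^A) on the source with the D-mutation μ_k^D on the target, wherever all maps are defined. -/
import Mathlib


open Finset

variable {I : Type*} [Fintype I] [DecidableEq I]

/-- Seed mutation of a skew-symmetric exchange matrix in direction `k`. -/
def mutate (ε : I → I → ℤ) (k : I) : I → I → ℤ :=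
  fun i j => if i = k ∨ j = k then -ε i j
    else ε i j + (|ε i k| * ε k j + ε i k * |ε k j|) / 2

/-- The cluster Poisson (X-coordinate) mutation in direction `k`. -/
noncomputable def Xmut (ε : I → I → ℤ) (k : I) (X : I → ℂ) : I → ℂ :=
  fun i => if i = k then (X k)⁻¹
    else X i * (1 + X k ^ (-(ε i k).sign)) ^ (-(ε i k))

/-- `∏_{j : ε_{kj} > 0} A_j ^ {ε_{kj}}`. -/
noncomputable def plusProd (ε : I → I → ℤ) (k : I) (A : I → ℂ) : ℂ :=
  ∏ j ∈ univ.filter fun j => 0 < ε k j, A j ^ ε k j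

/-- `∏_{j : ε_{kj} < 0} A_j ^ {-ε_{kj}}`. -/
noncomputable def minusProd (ε : I → I → ℤ) (k : I) (A : I → ℂ) : ℂ :=
  ∏ j ∈ univ.filter fun j => ε k j < 0, A j ^ (-ε k j)

/-- The cluster K₂ (A-coordinate) mutation in direction `k`. -/
noncomputable def Amut (ε : I → I → ℤ) (k : I) (A : I → ℂ) : I → ℂ :=
  fun i => if i = k then (A k)⁻¹ * (plusProd ε k A + minusProd ε k A) else A i

/-- The monomial map `p : A ↦ (∏_j A_j^{ε_{ij}})_i`. -/
noncomputable def pmap (ε : I → I → ℤ) (A : I → ℂ) : I → ℂ :=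
  fun i => ∏ j, A j ^ ε i j

/-- The symplectic double (D-coordinate) mutation in direction `k`, acting on
pairs `(B, X)`. -/
noncomputable def Dmut (ε : I → I → ℤ) (k : I) (BX : (I → ℂ) × (I → ℂ)) :
    (I → ℂ) × (I → ℂ) :=
  ⟨fun i => if i = k then
      (BX.2 k * plusProd ε k BX.1 + minusProd ε k BX.1) / ((1 + BX.2 k) * BX.1 k)
    else BX.1 i,
    Xmut ε k BX.2⟩

/-- The map `φ : (A, Ao) ↦ (B, X)` with `B_i = Ao_i / A_i`, `X_i = ∏_j A_j^{ε_{ij}}`. -/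
noncomputable def phimap (ε : I → I → ℤ) (AA : (I → ℂ) × (I → ℂ)) :
    (I → ℂ) × (I → ℂ) :=
  ⟨fun i => AA.2 i / AA.1 i, pmap ε AA.1⟩

/-- The map `π : (B, X) ↦ (X, (X_i ∏_j B_j^{ε_{ij}})_i)`. -/
noncomputable def pimap (ε : I → I → ℤ) (BX : (I → ℂ) × (I → ℂ)) :
    (I → ℂ) × (I → ℂ) :=
  ⟨BX.2, fun i => BX.2 i * ∏ j, BX.1 j ^ ε i j⟩

/-- The involution `ι : (B, X) ↦ (B⁻¹, (X_i ∏_j B_j^{ε_{ij}})_i)`. -/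
noncomputable def iota (ε : I → I → ℤ) (BX : (I → ℂ) × (I → ℂ)) :
    (I → ℂ) × (I → ℂ) :=
  ⟨fun i => (BX.1 i)⁻¹, fun i => BX.2 i * ∏ j, BX.1 j ^ ε i j⟩


set_option linter.unusedSectionVars false

lemma aux_div2_pos (a b : ℤ) (ha : 0 < a) : (|a| * b + a * |b|) / 2 = a * max b 0 := by
  rw [abs_of_pos ha]
  have h : a * b + a * |b| = 2 * (a * max b 0) := by
    rcases le_or_gt 0 b with hb | hb
    · rw [abs_of_nonneg hb, max_eq_left hb]; ring
    · rw [abs_of_neg hb, max_eq_right hb.le]; ring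
  rw [h, Int.mul_ediv_cancel_left _ two_ne_zero]

lemma aux_div2_neg (a b : ℤ) (ha : a < 0) : (|a| * b + a * |b|) / 2 = a * max (-b) 0 := by
  rw [abs_of_neg ha]
  have h : -a * b + a * |b| = 2 * (a * max (-b) 0) := by
    rcases le_or_gt 0 b with hb | hb
    · rw [abs_of_nonneg hb, max_eq_right (by omega)]; ring
    · rw [abs_of_neg hb, max_eq_left (by omega)]; ring
  rw [h, Int.mul_ediv_cancel_left _ two_ne_zero]

lemma aux_final (x q p s : ℂ) (a : ℤ) :
    x ^ a * q * (s / p) ^ (-a) = (x⁻¹ * s) ^ (-a) * (q * p ^ a) := by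
  rw [div_zpow, mul_zpow, inv_zpow', neg_neg, zpow_neg p, div_eq_mul_inv, inv_inv]
  ring

lemma plusProd_ne' (ε : I → I → ℤ) (k : I) (A : I → ℂ) (hA : ∀ i, A i ≠ 0) :
    plusProd ε k A ≠ 0 :=
  Finset.prod_ne_zero_iff.mpr fun j _ => zpow_ne_zero _ (hA j)

lemma minusProd_ne' (ε : I → I → ℤ) (k : I) (A : I → ℂ) (hA : ∀ i, A i ≠ 0) :
    minusProd ε k A ≠ 0 :=
  Finset.prod_ne_zero_iff.mpr fun j _ => zpow_ne_zero _ (hA j)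

lemma plusProd_erase' (ε : I → I → ℤ) (k : I) (hk : ε k k = 0) (A : I → ℂ) :
    plusProd ε k A = ∏ j ∈ univ.erase k, A j ^ max (ε k j) 0 := by
  have h1 : ∏ j ∈ univ.filter (fun j => 0 < ε k j), A j ^ ε k j
      = ∏ j ∈ univ.filter (fun j => 0 < ε k j), A j ^ max (ε k j) 0 :=
    Finset.prod_congr rfl fun j hj => by
      rw [max_eq_left (le_of_lt (mem_filter.mp hj).2)]
  rw [plusProd, h1]
  apply Finset.prod_subset
  · intro j hj
    rw [mem_filter] at hj
    rw [mem_erase]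
    exact ⟨fun h => by rw [h, hk] at hj; exact lt_irrefl 0 hj.2, mem_univ j⟩
  · intro j _ hj
    rw [mem_filter] at hj
    push_neg at hj
    rw [max_eq_right (hj (mem_univ j)), zpow_zero]

lemma minusProd_erase' (ε : I → I → ℤ) (k : I) (hk : ε k k = 0) (A : I → ℂ) :
    minusProd ε k A = ∏ j ∈ univ.erase k, A j ^ max (-ε k j) 0 := by
  have h1 : ∏ j ∈ univ.filter (fun j => ε k j < 0), A j ^ (-ε k j)
      = ∏ j ∈ univ.filter (fun j => ε k j < 0), A j ^ max (-ε k j) 0 :=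
    Finset.prod_congr rfl fun j hj => by
      rw [max_eq_left (by have := (mem_filter.mp hj).2; omega)]
  rw [minusProd, h1]
  apply Finset.prod_subset
  · intro j hj
    rw [mem_filter] at hj
    rw [mem_erase]
    exact ⟨fun h => by rw [h, hk] at hj; exact lt_irrefl 0 hj.2, mem_univ j⟩
  · intro j _ hj
    rw [mem_filter] at hj
    push_neg at hj
    rw [max_eq_right (by have := hj (mem_univ j); omega), zpow_zero]

lemma plusProd_div' (ε : I → I → ℤ) (k : I) (A Ao : I → ℂ) :
    plusProd ε k (fun i => Ao i / A i) = plusProd ε k Ao / plusProd ε k A := by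
  rw [plusProd, plusProd, plusProd, ← Finset.prod_div_distrib]
  exact Finset.prod_congr rfl fun j _ => div_zpow _ _ _

lemma minusProd_div' (ε : I → I → ℤ) (k : I) (A Ao : I → ℂ) :
    minusProd ε k (fun i => Ao i / A i) = minusProd ε k Ao / minusProd ε k A := by
  rw [minusProd, minusProd, minusProd, ← Finset.prod_div_distrib]
  exact Finset.prod_congr rfl fun j _ => div_zpow _ _ _

lemma pmap_k' (ε : I → I → ℤ) (k : I) (hk : ε k k = 0) (A : I → ℂ) (hA : ∀ i, A i ≠ 0) :
    pmap ε A k = plusProd ε k A / minusProd ε k A := by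
  rw [plusProd_erase' ε k hk A, minusProd_erase' ε k hk A, ← Finset.prod_div_distrib]
  have h0 : pmap ε A k = ∏ j ∈ univ.erase k, A j ^ ε k j := by
    rw [pmap, ← Finset.mul_prod_erase univ _ (mem_univ k), hk, zpow_zero, one_mul]
  rw [h0]
  apply Finset.prod_congr rfl
  intro j _
  rw [← zpow_sub₀ (hA j)]
  congr 1
  omega

/-- the map `φ` intertwines the pair of A-mutations with the
D-mutation, target coordinates using the mutated matrix. -/
theorem stmt11 {I : Type*} [Fintype I] [DecidableEq I]
    (ε : I → I → ℤ) (hskew : ∀ i j, ε i j = -ε j i) (k : I)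
    (A Ao : I → ℂ) (hA : ∀ i, A i ≠ 0) (hAo : ∀ i, Ao i ≠ 0)
    (hsum : plusProd ε k A + minusProd ε k A ≠ 0)
    (hsumo : plusProd ε k Ao + minusProd ε k Ao ≠ 0) :
    Dmut ε k (phimap ε (A, Ao)) = phimap (mutate ε k) (Amut ε k A, Amut ε k Ao) := by
  have hkk : ε k k = 0 := by have := hskew k k; omega
  have hPne := plusProd_ne' ε k A hA
  have hMne := minusProd_ne' ε k A hA
  have hPo := plusProd_ne' ε k Ao hAo
  have hMo := minusProd_ne' ε k Ao hAo
  have hXk : pmap ε A k = plusProd ε k A / minusProd ε k A := pmap_k' ε k hkk A hA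
  simp only [Dmut, phimap, Prod.mk.injEq]
  constructor
  · funext i
    by_cases hik : i = k
    · rw [hik, if_pos rfl]
      have hAm : Amut ε k A k = (A k)⁻¹ * (plusProd ε k A + minusProd ε k A) := by
        simp [Amut]
      have hAmo : Amut ε k Ao k = (Ao k)⁻¹ * (plusProd ε k Ao + minusProd ε k Ao) := by
        simp [Amut]
      rw [hAm, hAmo, plusProd_div', minusProd_div', hXk]
      have hsum' : minusProd ε k A + plusProd ε k A ≠ 0 := by
        rw [add_comm]; exact hsum
      have h1 : (1 : ℂ) + plusProd ε k A / minusProd ε k A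
          = (minusProd ε k A + plusProd ε k A) / minusProd ε k A := by
        rw [eq_div_iff hMne, add_mul, one_mul, div_mul_cancel₀ _ hMne]
      have hd1 : (minusProd ε k A + plusProd ε k A) / minusProd ε k A * (Ao k / A k) ≠ 0 :=
        mul_ne_zero (div_ne_zero hsum' hMne) (div_ne_zero (hAo k) (hA k))
      have hd2 : (A k)⁻¹ * (plusProd ε k A + minusProd ε k A) ≠ 0 :=
        mul_ne_zero (inv_ne_zero (hA k)) hsum
      rw [h1, div_eq_div_iff hd1 hd2]
      field_simp [hPne, hMne, hA k, hAo k]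
      ring
    · simp only [if_neg hik, Amut, if_neg hik]
  · funext i
    by_cases hik : i = k
    · rw [hik]
      simp only [Xmut, if_pos rfl, pmap]
      rw [← Finset.prod_inv_distrib]
      apply Finset.prod_congr rfl
      intro j _
      have hm : mutate ε k k j = -ε k j := by simp [mutate]
      rw [hm]
      by_cases hj : j = k
      · subst hj; rw [hkk]; simp
      · simp only [Amut, if_neg hj]
        rw [zpow_neg]
    · have hmutk : mutate ε k i k = -ε i k := by simp [mutate]
      have hAmutk : Amut ε k A k = (A k)⁻¹ * (plusProd ε k A + minusProd ε k A) := by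
        simp [Amut]
      have hL : Xmut ε k (pmap ε A) i
          = pmap ε A i * (1 + pmap ε A k ^ (-(ε i k).sign)) ^ (-ε i k) := by
        simp [Xmut, hik]
      have hsplit : pmap ε A i = A k ^ ε i k * ∏ j ∈ univ.erase k, A j ^ ε i j :=
        (Finset.mul_prod_erase univ _ (mem_univ k)).symm
      have hR : pmap (mutate ε k) (Amut ε k A) i
          = Amut ε k A k ^ (-ε i k) * ∏ j ∈ univ.erase k, A j ^ mutate ε k i j := by
        simp only [pmap]
        rw [← Finset.mul_prod_erase univ _ (mem_univ k), hmutk]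
        congr 1
        apply Finset.prod_congr rfl
        intro j hj
        rw [mem_erase] at hj
        simp [Amut, hj.1]
      rcases lt_trichotomy (ε i k) 0 with ha | ha | ha
      · -- ε i k < 0
        have hsgn : (ε i k).sign = -1 := Int.sign_eq_neg_one_of_neg ha
        have hexp : ∀ j ∈ univ.erase k,
            mutate ε k i j = ε i j + ε i k * max (-ε k j) 0 := by
          intro j hj
          rw [mem_erase] at hj
          simp only [mutate]
          rw [if_neg (not_or.mpr ⟨hik, hj.1⟩), aux_div2_neg _ _ ha]
        have hprod : ∏ j ∈ univ.erase k, A j ^ mutate ε k i j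
            = (∏ j ∈ univ.erase k, A j ^ ε i j) * minusProd ε k A ^ ε i k := by
          rw [minusProd_erase' ε k hkk A, ← Finset.prod_zpow, ← Finset.prod_mul_distrib]
          apply Finset.prod_congr rfl
          intro j hj
          rw [hexp j hj, zpow_add₀ (hA j), mul_comm (ε i k) (max (-ε k j) 0), zpow_mul]
        have h1 : (1 : ℂ) + plusProd ε k A / minusProd ε k A
            = (plusProd ε k A + minusProd ε k A) / minusProd ε k A := by
          rw [eq_div_iff hMne, add_mul, one_mul, div_mul_cancel₀ _ hMne, add_comm]
        rw [hL, hR, hprod, hsplit, hAmutk, hsgn, hXk, neg_neg, zpow_one, h1]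
        exact aux_final (A k) _ (minusProd ε k A) _ (ε i k)
      · -- ε i k = 0
        have hexp : ∀ j ∈ univ.erase k, mutate ε k i j = ε i j := by
          intro j hj
          rw [mem_erase] at hj
          simp only [mutate]
          rw [if_neg (not_or.mpr ⟨hik, hj.1⟩), ha]
          simp
        have hprod : ∏ j ∈ univ.erase k, A j ^ mutate ε k i j
            = ∏ j ∈ univ.erase k, A j ^ ε i j :=
          Finset.prod_congr rfl fun j hj => by rw [hexp j hj]
        rw [hL, hR, hprod, hsplit, ha]
        simp
      · -- 0 < ε i k
        have hsgn : (ε i k).sign = 1 := Int.sign_eq_one_of_pos ha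
        have hexp : ∀ j ∈ univ.erase k,
            mutate ε k i j = ε i j + ε i k * max (ε k j) 0 := by
          intro j hj
          rw [mem_erase] at hj
          simp only [mutate]
          rw [if_neg (not_or.mpr ⟨hik, hj.1⟩), aux_div2_pos _ _ ha]
        have hprod : ∏ j ∈ univ.erase k, A j ^ mutate ε k i j
            = (∏ j ∈ univ.erase k, A j ^ ε i j) * plusProd ε k A ^ ε i k := by
          rw [plusProd_erase' ε k hkk A, ← Finset.prod_zpow, ← Finset.prod_mul_distrib]
          apply Finset.prod_congr rfl
          intro j hj
          rw [hexp j hj, zpow_add₀ (hA j), mul_comm (ε i k) (max (ε k j) 0), zpow_mul]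
        have h1 : (1 : ℂ) + (plusProd ε k A / minusProd ε k A)⁻¹
            = (plusProd ε k A + minusProd ε k A) / plusProd ε k A := by
          rw [inv_div, eq_div_iff hPne, add_mul, one_mul, div_mul_cancel₀ _ hPne, add_comm]
        rw [hL, hR, hprod, hsplit, hAmutk, hsgn, hXk, zpow_neg_one, h1]
        exact aux_final (A k) _ (plusProd ε k A) _ (ε i k)
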